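/- Assume n ≥ 2, τ_0' = τ_0, τ_1' = τ_1, and τ_0, τ_1 ∈ Z(G). Then for every g ∈ G and w ∈ R with g(w) ∈ C_w, there exists σ ∈ ⟨τ_0, τ_1⟩ with g(w) = σ(w), and for this σ one has g^k(w) = σ^k(w) for every integer k. Consequently, the intersection of any orbit of G_v with any block of ℬ_2 is either empty, a single point, an orbit of a nontrivial element of ⟨τ_0, τ_1⟩, or the entire block of ℬ_2. -/

import Mathlib

abbrev Pt (p n : ℕ) := Fin n → ZMod p

/-- The left regular representation `R_L` of `(ℤ/pℤ)^n` inside `Sym(R)`: all translations. -/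
def RL (p n : ℕ) : Subgroup (Equiv.Perm (Pt p n)) where
  carrier := {σ | ∃ r : Pt p n, ∀ x, σ x = r + x}
  one_mem' := ⟨0, fun x => by simp⟩
  mul_mem' := by
    rintro a b ⟨r, hr⟩ ⟨s, hs⟩
    refine ⟨r + s, fun x => ?_⟩
    simp [Equiv.Perm.mul_apply, hr, hs, add_assoc]
  inv_mem' := by
    rintro a ⟨r, hr⟩
    refine ⟨-r, fun x => ?_⟩
    have h := hr (a⁻¹ x)
    rw [show a (a⁻¹ x) = x from a.apply_symm_apply x] at h
    have h2 : -r + x = a⁻¹ x := by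
      conv_lhs => rw [h]
      abel
    exact h2.symm

/-- The conjugate `π⁻¹ R_L π` of the left regular representation. -/
def RLpi (p n : ℕ) (π : Equiv.Perm (Pt p n)) : Subgroup (Equiv.Perm (Pt p n)) where
  carrier := {σ | ∃ ρ ∈ RL p n, σ = π⁻¹ * ρ * π}
  one_mem' := ⟨1, one_mem _, by group⟩
  mul_mem' := by
    rintro a b ⟨r, hr, rfl⟩ ⟨s, hs, rfl⟩
    exact ⟨r * s, mul_mem hr hs, by group⟩
  inv_mem' := by
    rintro a ⟨r, hr, rfl⟩
    exact ⟨r⁻¹, inv_mem hr, by group⟩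

/-- `σ` belongs to the 2-closure `G^{(2)}` of `G`. -/
def twoClosed {α : Type*} (G : Subgroup (Equiv.Perm α)) (σ : Equiv.Perm α) : Prop :=
  ∀ x y : α, ∃ g ∈ G, σ x = g x ∧ σ y = g y

/-!
`τ₀` and `τ₁` are translations by linearly independent vectors (`τ₀ ≠ 1`, and `τ₁` is not a
power of `τ₀` because it moves a block of `ℬ₁`), so `T = ⟨τ₀, τ₁⟩ ≅ (ℤ/p)²` acts freely and,
preserving each block of `ℬ₂` of size `p²`, regularly on it. Thus `g(w) ∈ C_w` gives
`g(w) = σ(w)` for some `σ ∈ T`, and as `σ` commutes with `g`, `σ⁻¹g` fixes `w` and commutes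
with `σ`, whence `g^k(w) = σ^k(w)`. For `u` in an orbit `G_v u` meeting a block `C`, the
`σ ∈ T` with `σ(u) ∈ G_v u` form a subgroup `H` (again by centrality) with
`G_v u ∩ C = H u`; and `H`, of order `1`, `p` or `p²`, is trivial, cyclic, or all of `T`.
-/

open Equiv MulAction Pointwise

section GroupActions

variable {M α : Type*} [Group M] [MulAction M α]

theorem Commute.zpow_smul_eq_of_smul_eq {g σ : M} {w : α} (hc : Commute g σ)
    (h : g • w = σ • w) (k : ℤ) : g ^ k • w = σ ^ k • w := by
  have hfix : σ⁻¹ * g ∈ stabilizer M w := by rw [mem_stabilizer_iff, mul_smul, h, inv_smul_smul]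
  have hg : g ^ k = σ ^ k * (σ⁻¹ * g) ^ k := by
    rw [← ((Commute.refl σ).inv_right.mul_right hc.symm).mul_zpow, mul_inv_cancel_left]
  rw [hg, mul_smul, mem_stabilizer_iff.1 (zpow_mem hfix k)]

def stabilizerOrbit (G : Subgroup M) (v w : α) : Set α :=
  {x | ∃ g ∈ G, g • v = v ∧ g • w = x}

theorem stabilizerOrbit_eq_of_mem {G : Subgroup M} {v w u : α}
    (hu : u ∈ stabilizerOrbit G v w) : stabilizerOrbit G v u = stabilizerOrbit G v w := by
  obtain ⟨g₀, hg₀, hg₀v, rfl⟩ := hu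
  have hg₀v' : g₀⁻¹ • v = v := inv_smul_eq_iff.2 hg₀v.symm
  ext x
  constructor
  · rintro ⟨g, hg, hgv, rfl⟩
    exact ⟨g * g₀, mul_mem hg hg₀, by rw [mul_smul, hg₀v, hgv], mul_smul _ _ _⟩
  · rintro ⟨g, hg, hgv, rfl⟩
    exact ⟨g * g₀⁻¹, mul_mem hg (inv_mem hg₀), by rw [mul_smul, hg₀v', hgv],
      by rw [mul_smul, inv_smul_smul]⟩

def stabilizerOrbitSubgroup {G T : Subgroup M} (hT : T ≤ Subgroup.centralizer G)
    (v u : α) : Subgroup M where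
  carrier := {σ | σ ∈ T ∧ σ • u ∈ stabilizerOrbit G v u}
  one_mem' := ⟨T.one_mem, 1, G.one_mem, one_smul _ _, rfl⟩
  mul_mem' := by
    rintro σ τ ⟨hσ, g, hg, hgv, hgu⟩ ⟨hτ, h, hh, hhv, hhu⟩
    refine ⟨T.mul_mem hσ hτ, h * g, G.mul_mem hh hg, by rw [mul_smul, hgv, hhv], ?_⟩
    rw [mul_smul, mul_smul, ← hhu, hgu, smul_smul, smul_smul,
      Subgroup.mem_centralizer_iff.1 (hT hσ) h hh]
  inv_mem' := by
    rintro σ ⟨hσ, g, hg, hgv, hgu⟩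
    refine ⟨T.inv_mem hσ, g⁻¹, G.inv_mem hg, inv_smul_eq_iff.2 hgv.symm, ?_⟩
    simpa using
      Commute.zpow_smul_eq_of_smul_eq (Subgroup.mem_centralizer_iff.1 (hT hσ) g hg) hgu (-1)

theorem mem_stabilizerOrbitSubgroup {G T : Subgroup M} {hT : T ≤ Subgroup.centralizer G}
    {v u : α} {σ : M} :
    σ ∈ stabilizerOrbitSubgroup hT v u ↔ σ ∈ T ∧ σ • u ∈ stabilizerOrbit G v u :=
  Iff.rfl

theorem stabilizerOrbitSubgroup_le {G T : Subgroup M} (hT : T ≤ Subgroup.centralizer G)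
    (v u : α) : stabilizerOrbitSubgroup hT v u ≤ T :=
  fun _ hσ => (mem_stabilizerOrbitSubgroup.1 hσ).1

theorem stabilizerOrbit_inter_orbit {G T : Subgroup M} (hT : T ≤ Subgroup.centralizer G)
    (v u : α) :
    stabilizerOrbit G v u ∩ orbit T u = orbit (stabilizerOrbitSubgroup hT v u) u := by
  ext x
  constructor
  · rintro ⟨hx, σ, rfl⟩
    exact ⟨⟨σ, mem_stabilizerOrbitSubgroup.2 ⟨σ.2, hx⟩⟩, rfl⟩
  · rintro ⟨⟨σ, hσ⟩, rfl⟩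
    obtain ⟨hσT, hσu⟩ := mem_stabilizerOrbitSubgroup.1 hσ
    exact ⟨hσu, ⟨σ, hσT⟩, rfl⟩

theorem ncard_orbit_of_smul_eq_self {u : α} (hfree : ∀ g : M, g • u = u → g = 1) :
    (orbit M u).ncard = Nat.card M := by
  have hstab : stabilizer M u = ⊥ := (Subgroup.eq_bot_iff_forall _).2 hfree
  rw [← index_stabilizer, hstab, Subgroup.index_bot]

theorem orbit_bot_subgroup (u : α) : orbit (⊥ : Subgroup M) u = {u} := by
  ext x
  simp [mem_orbit_iff, eq_comm]

theorem orbit_zpowers (σ : M) (u : α) :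
    orbit (Subgroup.zpowers σ) u = {x | ∃ k : ℤ, σ ^ k • u = x} := by
  ext x
  simp only [mem_orbit_iff, Subgroup.exists_zpowers]
  rfl

theorem Subgroup.zpowers_eq_of_card_eq_prime {H : Subgroup M} [Finite H] {p : ℕ} (hp : p.Prime)
    (hH : Nat.card H = p) {σ : M} (hσH : σ ∈ H) (hσ : σ ≠ 1) : Subgroup.zpowers σ = H := by
  refine Subgroup.eq_of_le_of_card_ge (Subgroup.zpowers_le.2 hσH) ?_
  have hdvd := _root_.orderOf_dvd_natCard (⟨σ, hσH⟩ : H)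
  rw [Subgroup.orderOf_mk, hH] at hdvd
  rw [Nat.card_zpowers, hH]
  rcases (Nat.dvd_prime hp).1 hdvd with h1 | hp'
  · exact absurd (orderOf_eq_one_iff.1 h1) hσ
  · exact hp'.ge

theorem orbit_eq_singleton_or_zpowers_or_eq_of_le {p : ℕ} [Fact p.Prime]
    {H T : Subgroup M} (hHT : H ≤ T) {u : α} (hfree : ∀ σ ∈ T, σ • u = u → σ = 1)
    (hcard : (orbit T u).ncard = p ^ 2) :
    orbit H u = {u} ∨ (∃ σ ∈ H, σ ≠ 1 ∧ orbit H u = {x | ∃ k : ℤ, σ ^ k • u = x}) ∨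
      orbit H u = orbit T u := by
  have hp := (Fact.out : p.Prime)
  have hT : Nat.card T = p ^ 2 :=
    (ncard_orbit_of_smul_eq_self fun σ hσ => Subtype.ext (hfree σ σ.2 hσ)).symm.trans hcard
  have : Finite T := Nat.finite_of_card_ne_zero (by simp [hT, hp.ne_zero])
  have : Finite H := Finite.of_injective _ (Subgroup.inclusion_injective hHT)
  obtain ⟨i, hi, hH⟩ := (Nat.dvd_prime_pow hp).1 (hT ▸ Subgroup.card_dvd_of_le hHT)
  interval_cases i
  · left
    rw [Subgroup.eq_bot_of_card_eq H (by simpa using hH), orbit_bot_subgroup]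
  · right; left
    obtain hbot | ⟨σ, hσH, hσ⟩ := H.bot_or_exists_ne_one
    · simp [hbot, hp.ne_one.symm] at hH
    refine ⟨σ, hσH, hσ, ?_⟩
    rw [← Subgroup.zpowers_eq_of_card_eq_prime hp (by simpa using hH) hσH hσ, orbit_zpowers]
  · right; right
    rw [Subgroup.eq_of_le_of_card_ge hHT (by rw [hH, hT])]

end GroupActions

theorem fixingSubgroup_le_of_refines {α : Type*} [Finite α] {P Q : Set (Set α)}
    (hP : Setoid.IsPartition P) (hQ : Setoid.IsPartition Q) (href : ∀ b ∈ P, ∃ c ∈ Q, b ⊆ c) :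
    fixingSubgroup (Perm α) P ≤ fixingSubgroup (Perm α) Q := by
  intro f hf
  rw [mem_fixingSubgroup_iff] at hf ⊢
  intro c hc
  refine Set.eq_of_subset_of_ncard_le ?_ (Set.ncard_image_of_injective c f.injective).ge
  rintro _ ⟨x, hxc, rfl⟩
  obtain ⟨b, ⟨hb, hxb⟩, -⟩ := hP.2 x
  obtain ⟨c', hc', hbc'⟩ := href b hb
  obtain rfl : c' = c := (hQ.2 x).unique ⟨hc', hbc' hxb⟩ ⟨hc, hxc⟩
  exact hbc' (hf b hb ▸ Set.smul_mem_smul_set hxb)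

section Translations

variable {p n : ℕ}

theorem RL.eq_one_of_apply_eq_self {σ : Perm (Pt p n)} (hσ : σ ∈ RL p n) {x : Pt p n}
    (h : σ x = x) : σ = 1 := by
  obtain ⟨r, hr⟩ := hσ
  have hr0 : r = 0 := by rwa [hr, add_eq_right] at h
  ext y
  simp [hr, hr0]

theorem pow_apply_of_forall_apply_eq_add {σ : Perm (Pt p n)} {r : Pt p n}
    (hσ : ∀ x, σ x = r + x) (m : ℕ) (x : Pt p n) : (σ ^ m) x = m • r + x := by
  induction m with
  | zero => simp
  | succ k ih => rw [pow_succ', Perm.mul_apply, ih, hσ, succ_nsmul', add_assoc]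

theorem pow_val_apply_of_forall_apply_eq_add [NeZero p] {σ : Perm (Pt p n)} {r : Pt p n}
    (hσ : ∀ x, σ x = r + x) (a : ZMod p) (x : Pt p n) : (σ ^ a.val) x = a • r + x := by
  rw [pow_apply_of_forall_apply_eq_add hσ, ← Nat.cast_smul_eq_nsmul (ZMod p), ZMod.natCast_val,
    ZMod.cast_id]

theorem linearIndependent_of_forall_apply_eq_add [Fact p.Prime] {σ τ : Perm (Pt p n)}
    {s t : Pt p n} (hσ : ∀ x, σ x = s + x) (hτ : ∀ x, τ x = t + x) (hσ1 : σ ≠ 1)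
    (hτσ : τ ∉ Subgroup.zpowers σ) : LinearIndependent (ZMod p) ![s, t] := by
  have hs : s ≠ 0 := by
    rintro rfl
    exact hσ1 (Perm.ext fun x => by simp [hσ])
  refine (LinearIndependent.pair_iff' hs).2 fun a hat =>
    hτσ (Subgroup.mem_zpowers_iff.2 ⟨a.val, Perm.ext fun x => ?_⟩)
  rw [zpow_natCast, pow_val_apply_of_forall_apply_eq_add hσ, hat, hτ]

theorem orbit_closure_pair_eq_of_forall_apply_eq_add [Fact p.Prime] {σ τ : Perm (Pt p n)}
    {s t : Pt p n} (hσ : ∀ x, σ x = s + x) (hτ : ∀ x, τ x = t + x)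
    (hst : LinearIndependent (ZMod p) ![s, t]) {c : Set (Pt p n)} (hσc : σ • c = c)
    (hτc : τ • c = c) (hcard : c.ncard = p ^ 2) {w : Pt p n} (hw : w ∈ c) :
    orbit (Subgroup.closure {σ, τ}) w = c := by
  have hsub : orbit (Subgroup.closure {σ, τ}) w ⊆ c := by
    rintro _ ⟨ρ, rfl⟩
    have hρ : (ρ : Perm (Pt p n)) ∈ stabilizer (Perm (Pt p n)) c :=
      (Subgroup.closure_le _).2 (Set.pair_subset hσc hτc) ρ.2
    exact hρ ▸ Set.smul_mem_smul_set hw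
  set plane := fun ab : ZMod p × ZMod p => ab.1 • s + ab.2 • t + w
  have hplane : Set.range plane ⊆ orbit (Subgroup.closure {σ, τ}) w := by
    rintro _ ⟨⟨a, b⟩, rfl⟩
    refine ⟨⟨σ ^ a.val * τ ^ b.val, mul_mem (pow_mem (Subgroup.subset_closure (by simp)) _)
      (pow_mem (Subgroup.subset_closure (by simp)) _)⟩, ?_⟩
    show (σ ^ a.val * τ ^ b.val) w = _
    rw [Perm.mul_apply, pow_val_apply_of_forall_apply_eq_add hτ,
      pow_val_apply_of_forall_apply_eq_add hσ]
    exact (add_assoc _ _ _).symm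
  have hinj : Function.Injective plane := by
    rintro ⟨a, b⟩ ⟨a', b'⟩ h
    obtain ⟨ha, hb⟩ := LinearIndependent.pair_iff.1 hst (a - a') (b - b') (by
      simp only [plane] at h
      linear_combination (norm := module) h)
    simp [sub_eq_zero.1 ha, sub_eq_zero.1 hb]
  refine Set.eq_of_subset_of_ncard_le hsub ?_ (Set.toFinite _)
  calc c.ncard = Nat.card (ZMod p × ZMod p) := by simp [hcard, sq]
    _ = (Set.range plane).ncard := (Set.ncard_range_of_injective hinj).symm
    _ ≤ _ := Set.ncard_le_ncard hplane (Set.toFinite _)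

end Translations

theorem orbit_closure_eq_of_mem_blocks {p n : ℕ} [Fact p.Prime] (hn : 2 ≤ n)
    {B : ℕ → Set (Set (Pt p n))} (hBpart : ∀ i ≤ n, Setoid.IsPartition (B i))
    (hBsize : ∀ i ≤ n, ∀ b ∈ B i, Nat.card b = p ^ i)
    (hBref : ∀ i < n, ∀ b ∈ B i, ∃ c ∈ B (i + 1), b ⊆ c) {τ : ℕ → Perm (Pt p n)}
    (hτ : ∀ i < n, τ i ∈ RL p n ∧ (∀ b ∈ B (i + 1), ⇑(τ i) '' b = b) ∧
      ¬ ∀ b ∈ B i, ⇑(τ i) '' b = b)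
    {c : Set (Pt p n)} (hc : c ∈ B 2) {w : Pt p n} (hw : w ∈ c) :
    orbit (Subgroup.closure {τ 0, τ 1}) w = c := by
  obtain ⟨⟨s₀, hs₀⟩, hτ₀fix, hτ₀move⟩ := hτ 0 (by omega)
  obtain ⟨⟨s₁, hs₁⟩, hτ₁fix, hτ₁move⟩ := hτ 1 (by omega)
  have hτ₀ : τ 0 ∈ fixingSubgroup (Perm (Pt p n)) (B 1) := (mem_fixingSubgroup_iff _).2 hτ₀fix
  have hτ₀' : τ 0 ∈ fixingSubgroup (Perm (Pt p n)) (B 2) :=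
    fixingSubgroup_le_of_refines (hBpart 1 (by omega)) (hBpart 2 hn) (hBref 1 (by omega)) hτ₀
  have hindep := linearIndependent_of_forall_apply_eq_add hs₀ hs₁
    (fun h => hτ₀move (by simp [h]))
    (fun h => hτ₁move ((mem_fixingSubgroup_iff _).1 (Subgroup.zpowers_le.2 hτ₀ h)))
  refine orbit_closure_pair_eq_of_forall_apply_eq_add hs₀ hs₁ hindep
    ((mem_fixingSubgroup_iff _).1 hτ₀' c hc) (hτ₁fix c hc) ?_ hw
  rw [← Nat.card_coe_set_eq, hBsize 2 hn c hc]

theorem stmt_14_general (p n : ℕ) (hp : p.Prime) (hn : 2 ≤ n)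
    (G : Subgroup (Equiv.Perm (Pt p n)))
    (B : ℕ → Set (Set (Pt p n)))
    (hBpart : ∀ i ≤ n, Setoid.IsPartition (B i))
    (hBsize : ∀ i ≤ n, ∀ b ∈ B i, Nat.card b = p ^ i)
    (hBref : ∀ i < n, ∀ b ∈ B i, ∃ c ∈ B (i + 1), b ⊆ c)
    (τ : ℕ → Equiv.Perm (Pt p n))
    (hτ : ∀ i < n, τ i ∈ RL p n ∧ (∀ b ∈ B (i + 1), ⇑(τ i) '' b = b) ∧
      ¬ ∀ b ∈ B i, ⇑(τ i) '' b = b)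
    (v : Pt p n)
    (hZ : ∀ g ∈ G, Commute g (τ 0) ∧ Commute g (τ 1))
    (Cb : Pt p n → Set (Pt p n)) (hCb : ∀ w, Cb w ∈ B 2 ∧ w ∈ Cb w)
 :
    (∀ g ∈ G, ∀ w : Pt p n, g w ∈ Cb w →
      ∃ σ ∈ Subgroup.closure {τ 0, τ 1}, g w = σ w ∧ ∀ k : ℤ, (g ^ k) w = (σ ^ k) w) ∧
    (∀ w : Pt p n, ∀ Cc ∈ B 2,
      {x | ∃ g ∈ G, g v = v ∧ g w = x} ∩ Cc = ∅ ∨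
      (∃ x₀ : Pt p n, {x | ∃ g ∈ G, g v = v ∧ g w = x} ∩ Cc = {x₀}) ∨
      (∃ σ ∈ Subgroup.closure {τ 0, τ 1}, σ ≠ 1 ∧
        ∃ u : Pt p n, {x | ∃ g ∈ G, g v = v ∧ g w = x} ∩ Cc = {x | ∃ k : ℤ, (σ ^ k) u = x}) ∨
      {x | ∃ g ∈ G, g v = v ∧ g w = x} ∩ Cc = Cc) := by
  have : Fact p.Prime := ⟨hp⟩
  set T := Subgroup.closure {τ 0, τ 1}
  have horbit {c} (hc : c ∈ B 2) {w} (hw : w ∈ c) : orbit T w = c :=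
    orbit_closure_eq_of_mem_blocks hn hBpart hBsize hBref hτ hc hw
  have hTG : T ≤ Subgroup.centralizer G := (Subgroup.closure_le _).2 <| Set.pair_subset
    (Subgroup.mem_centralizer_iff.2 fun g hg => (hZ g hg).1)
    (Subgroup.mem_centralizer_iff.2 fun g hg => (hZ g hg).2)
  have hfree : ∀ σ ∈ T, ∀ u, σ u = u → σ = 1 := fun σ hσ _ =>
    RL.eq_one_of_apply_eq_self <| (Subgroup.closure_le _).2
      (Set.pair_subset (hτ 0 (by omega)).1 (hτ 1 (by omega)).1) hσ
  refine ⟨fun g hg w hgw => ?_, fun w c hc => ?_⟩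
  · rw [← horbit (hCb w).1 (hCb w).2] at hgw
    obtain ⟨σ, hσ⟩ := hgw
    exact ⟨σ, σ.2, hσ.symm, Commute.zpow_smul_eq_of_smul_eq
      (Subgroup.mem_centralizer_iff.1 (hTG σ.2) g hg) hσ.symm⟩
  · change stabilizerOrbit G v w ∩ c = ∅ ∨ (∃ x₀, stabilizerOrbit G v w ∩ c = {x₀}) ∨
      (∃ σ ∈ T, σ ≠ 1 ∧ ∃ u, stabilizerOrbit G v w ∩ c = {x | ∃ k : ℤ, (σ ^ k) u = x}) ∨
      stabilizerOrbit G v w ∩ c = c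
    obtain hempty | ⟨u, hu, huc⟩ := (stabilizerOrbit G v w ∩ c).eq_empty_or_nonempty
    · exact .inl hempty
    rw [← stabilizerOrbit_eq_of_mem hu, ← horbit hc huc, stabilizerOrbit_inter_orbit hTG]
    obtain hpt | ⟨σ, hσ, hσ1, hcyc⟩ | hall := orbit_eq_singleton_or_zpowers_or_eq_of_le
      (stabilizerOrbitSubgroup_le hTG v u) (fun σ hσ => hfree σ hσ u)
      (by rw [horbit hc huc, ← Nat.card_coe_set_eq, hBsize 2 hn c hc])
    · exact .inr <| .inl ⟨u, hpt⟩
    · exact .inr <| .inr <| .inl ⟨σ, stabilizerOrbitSubgroup_le hTG v u hσ, hσ1, u, hcyc⟩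
    · exact .inr <| .inr <| .inr hall

/-- If `τ₀, τ₁ ∈ Z(G)`, then for every `g ∈ G` and `w` with `g(w) ∈ C_w` there is
`σ ∈ ⟨τ₀, τ₁⟩` with `g(w) = σ(w)` and `g^k(w) = σ^k(w)` for all `k`; consequently the
intersection of any orbit of `G_v` with any block of `ℬ_2` is empty, a point, an orbit
of a nontrivial element of `⟨τ₀, τ₁⟩`, or the whole block. -/
theorem stmt_14 (p n : ℕ) (hp : p.Prime) (hn : 2 ≤ n)
    (π : Equiv.Perm (Pt p n))
    (G : Subgroup (Equiv.Perm (Pt p n))) (hG : G = RL p n ⊔ RLpi p n π)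
    (hpG : IsPGroup p ↑G)
    (B : ℕ → Set (Set (Pt p n)))
    (hBpart : ∀ i ≤ n, Setoid.IsPartition (B i))
    (hBsize : ∀ i ≤ n, ∀ b ∈ B i, Nat.card b = p ^ i)
    (hBinv : ∀ i ≤ n, ∀ g ∈ G, ∀ b ∈ B i, ⇑g '' b ∈ B i)
    (hBref : ∀ i < n, ∀ b ∈ B i, ∃ c ∈ B (i + 1), b ⊆ c)
    (τ : ℕ → Equiv.Perm (Pt p n))
    (hτ : ∀ i < n, τ i ∈ RL p n ∧ (∀ b ∈ B (i + 1), ⇑(τ i) '' b = b) ∧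
      ¬ ∀ b ∈ B i, ⇑(τ i) '' b = b)
    (v : Pt p n)
    (τ' : ℕ → Equiv.Perm (Pt p n))
    (hτ' : ∀ i < n, τ' i ∈ RLpi p n π ∧ τ' i v = τ i v)
    (hτ'0 : τ' 0 = τ 0) (hτ'1 : τ' 1 = τ 1)
    (hZ : ∀ g ∈ G, Commute g (τ 0) ∧ Commute g (τ 1))
    (Cb : Pt p n → Set (Pt p n)) (hCb : ∀ w, Cb w ∈ B 2 ∧ w ∈ Cb w)
 :
    (∀ g ∈ G, ∀ w : Pt p n, g w ∈ Cb w →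
      ∃ σ ∈ Subgroup.closure {τ 0, τ 1}, g w = σ w ∧ ∀ k : ℤ, (g ^ k) w = (σ ^ k) w) ∧
    (∀ w : Pt p n, ∀ Cc ∈ B 2,
      {x | ∃ g ∈ G, g v = v ∧ g w = x} ∩ Cc = ∅ ∨
      (∃ x₀ : Pt p n, {x | ∃ g ∈ G, g v = v ∧ g w = x} ∩ Cc = {x₀}) ∨
      (∃ σ ∈ Subgroup.closure {τ 0, τ 1}, σ ≠ 1 ∧
        ∃ u : Pt p n, {x | ∃ g ∈ G, g v = v ∧ g w = x} ∩ Cc = {x | ∃ k : ℤ, (σ ^ k) u = x}) ∨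
      {x | ∃ g ∈ G, g v = v ∧ g w = x} ∩ Cc = Cc) :=
  stmt_14_general p n hp hn G B hBpart hBsize hBref τ hτ v hZ Cb hCb
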